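/- Let n be even, and for 1 ≤ j ≤ (n-2)/2 let θ_j be arbitrary reals. Define the n×n matrix A = √(2/n)·( (1/√2)𝟙_n | (1/√2)v | C | S ), where v = ((-1)^i)_{i=1}^n, C = (cos(θ_j + 2ijπ/n))_{i,j}, S = (sin(θ_j + 2ijπ/n))_{i,j} are n × (n-2)/2 matrices. Then A is an orthogonal matrix. -/

import Mathlib

/-!
Every column of the matrix is a sampled cosine `i ↦ s · cos (φ + 2π(i+1)k/n)` with frequency
`0 ≤ k ≤ n/2`: the constant column has `k = 0`, the alternating one `k = n/2`, and the sine
column of index `j` is the cosine column of index `j` with its phase shifted by `-π/2`. By the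
product formula and the vanishing of sums of nontrivial `n`-th roots of unity, two such columns
have inner product `s s' n/2 · ([k = k'] cos (φ - φ') + [n ∣ k + k'] cos (φ + φ'))`, where the
second bracket only fires for `k = k' ∈ {0, n/2}`. Distinct frequencies therefore give orthogonal
columns, and a cosine and a sine column of the same
frequency are orthogonal because their phases differ by `π/2`.
-/

open Real Matrix Finset

lemma sum_range_pow_succ_of_pow_eq_one {K : Type*} [Field K] [DecidableEq K] {z : K} {n : ℕ}
    (hz : z ^ n = 1) : ∑ i ∈ range n, z ^ (i + 1) = if z = 1 then (n : K) else 0 := by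
  split_ifs with h
  · simp [h]
  · simp_rw [pow_succ', ← mul_sum, geom_sum_eq h, hz, sub_self, zero_div, mul_zero]

lemma sum_cos_add_two_mul_pi_div (n : ℕ) (hn : n ≠ 0) (φ : ℝ) (k : ℤ) :
    ∑ i : Fin n, cos (φ + 2 * (i + 1) * k * π / n) = if (n : ℤ) ∣ k then n * cos φ else 0 := by
  have hω := Complex.isPrimitiveRoot_exp n hn
  have hζ : (Complex.exp (2 * π * Complex.I / n) ^ k) ^ n = 1 := by
    rw [← zpow_natCast, ← _root_.zpow_mul, mul_comm k, _root_.zpow_mul, zpow_natCast,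
      hω.pow_eq_one, _root_.one_zpow]
  have hterm (i : ℕ) : cos (φ + 2 * (i + 1) * k * π / n) =
      (Complex.exp (φ * Complex.I) * (Complex.exp (2 * π * Complex.I / n) ^ k) ^ (i + 1)).re := by
    rw [← Complex.exp_ofReal_mul_I_re, ← Complex.exp_int_mul, ← Complex.exp_nat_mul,
      ← Complex.exp_add]
    congr 2
    push_cast
    ring
  rw [Fin.sum_univ_eq_sum_range (fun i => cos (φ + 2 * (i + 1) * k * π / n)),
    sum_congr rfl fun i _ => hterm i, ← Complex.re_sum, ← mul_sum,
    sum_range_pow_succ_of_pow_eq_one hζ]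
  by_cases h : (n : ℤ) ∣ k
  · rw [if_pos ((hω.zpow_eq_one_iff_dvd k).2 h), if_pos h, Complex.mul_re,
      Complex.natCast_re, Complex.natCast_im, mul_zero, sub_zero, Complex.exp_ofReal_mul_I_re,
      mul_comm]
  · rw [if_neg (mt (hω.zpow_eq_one_iff_dvd k).1 h), if_neg h, mul_zero, Complex.zero_re]

lemma sum_cos_mul_cos_two_mul_pi_div (n : ℕ) (hn : n ≠ 0) (φ ψ : ℝ) (k l : ℤ) :
    ∑ i : Fin n, cos (φ + 2 * (i + 1) * k * π / n) * cos (ψ + 2 * (i + 1) * l * π / n) =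
      ((if (n : ℤ) ∣ k - l then n * cos (φ - ψ) else 0) +
        (if (n : ℤ) ∣ k + l then n * cos (φ + ψ) else 0)) / 2 := by
  have hprod (a b : ℝ) : cos a * cos b = (cos (a - b) + cos (a + b)) / 2 := by
    rw [cos_sub, cos_add]; ring
  have hsub (i : Fin n) : φ + 2 * (i + 1) * k * π / n - (ψ + 2 * (i + 1) * l * π / n) =
      φ - ψ + 2 * (i + 1) * ((k - l : ℤ) : ℝ) * π / n := by push_cast; ring
  have hadd (i : Fin n) : φ + 2 * (i + 1) * k * π / n + (ψ + 2 * (i + 1) * l * π / n) =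
      φ + ψ + 2 * (i + 1) * ((k + l : ℤ) : ℝ) * π / n := by push_cast; ring
  simp_rw [hprod, hsub, hadd, ← sum_div, sum_add_distrib, sum_cos_add_two_mul_pi_div n hn]

lemma natCast_dvd_sub_iff_of_lt {n k l : ℕ} (hk : k < n) (hl : l < n) :
    (n : ℤ) ∣ (k : ℤ) - l ↔ k = l :=
  ⟨fun h => ((Nat.modEq_iff_dvd.2 h).eq_of_lt_of_lt hl hk).symm, by rintro rfl; simp⟩

lemma natCast_dvd_add_iff_of_add_le {n k l : ℕ} (h : k + l ≤ n) :
    (n : ℤ) ∣ (k : ℤ) + l ↔ k + l = 0 ∨ k + l = n := by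
  rw [← Nat.cast_add, Int.natCast_dvd_natCast]
  refine ⟨fun hd => ?_, by rintro (h | h) <;> simp [h]⟩
  rcases (k + l).eq_zero_or_pos with h0 | hpos
  exacts [Or.inl h0, Or.inr (Nat.le_antisymm h (Nat.le_of_dvd hpos hd))]

noncomputable section FourierMatrix

variable {m : ℕ}

def fourierFreq (c : Fin (2 * m + 2)) : ℕ :=
  if c.1 = 0 then 0 else if c.1 = 1 then m + 1 else if c.1 < m + 2 then c.1 - 1 else c.1 - (m + 1)

def fourierPhase (θ : Fin m → ℝ) (c : Fin (2 * m + 2)) : ℝ :=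
  if hc : c.1 < 2 then 0
  else if h : c.1 < m + 2 then θ ⟨c.1 - 2, by omega⟩
  else θ ⟨c.1 - (m + 2), by have := c.2; omega⟩ - π / 2

def fourierScale (c : Fin (2 * m + 2)) : ℝ :=
  if c.1 < 2 then √(1 / (2 * m + 2)) else √(2 / (2 * m + 2))

def fourierMatrix (θ : Fin m → ℝ) : Matrix (Fin (2 * m + 2)) (Fin (2 * m + 2)) ℝ :=
  Matrix.of fun i c => fourierScale c *
    cos (fourierPhase θ c + 2 * (i + 1) * ((fourierFreq c : ℤ) : ℝ) * π / (2 * m + 2 : ℕ))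

lemma fourierFreq_le (c : Fin (2 * m + 2)) : fourierFreq c ≤ m + 1 := by
  have := c.2
  unfold fourierFreq
  split_ifs <;> omega

lemma fourierFreq_mem_Icc_of_two_le {c : Fin (2 * m + 2)} (hc : 2 ≤ c.1) :
    fourierFreq c ∈ Set.Icc 1 m := by
  have := c.2
  unfold fourierFreq
  split_ifs <;> simp only [Set.mem_Icc] <;> omega

lemma eq_of_fourierFreq_eq_of_lt_two {c c' : Fin (2 * m + 2)}
    (h : fourierFreq c = fourierFreq c') (hc : c.1 < 2) : c = c' := by
  have := c'.2
  unfold fourierFreq at h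
  ext
  split_ifs at h <;> omega

lemma cos_fourierPhase_sub_of_fourierFreq_eq (θ : Fin m → ℝ) {c c' : Fin (2 * m + 2)}
    (h : fourierFreq c = fourierFreq c') (hc : 2 ≤ c.1) (hc' : 2 ≤ c'.1) :
    cos (fourierPhase θ c - fourierPhase θ c') = if c = c' then 1 else 0 := by
  have := c.2
  have := c'.2
  have hk : (if c.1 < m + 2 then c.1 - 1 else c.1 - (m + 1)) =
      (if c'.1 < m + 2 then c'.1 - 1 else c'.1 - (m + 1)) := by
    simpa [fourierFreq, show c.1 ≠ 0 by omega, show c.1 ≠ 1 by omega, show c'.1 ≠ 0 by omega,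
      show c'.1 ≠ 1 by omega] using h
  simp only [fourierPhase, dif_neg (show ¬ c.1 < 2 by omega), dif_neg (show ¬ c'.1 < 2 by omega)]
  by_cases hm : c.1 < m + 2 <;> by_cases hm' : c'.1 < m + 2 <;>
    simp only [hm, hm', if_true, if_false, dite_true, dite_false] at hk ⊢
  · obtain rfl : c = c' := Fin.ext (by omega)
    simp
  · rw [if_neg (by rintro rfl; omega)]
    simp only [show c.1 - 2 = c'.1 - (m + 2) by omega]
    simp
  · rw [if_neg (by rintro rfl; omega)]
    simp only [show c.1 - (m + 2) = c'.1 - 2 by omega]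
    simp
  · obtain rfl : c = c' := Fin.ext (by omega)
    simp

lemma fourierMatrix_transpose_mul_apply (θ : Fin m → ℝ) (c c' : Fin (2 * m + 2)) :
    ((fourierMatrix θ)ᵀ * fourierMatrix θ) c c' = fourierScale c * fourierScale c' *
      (((if fourierFreq c = fourierFreq c' then
          (2 * m + 2 : ℕ) * cos (fourierPhase θ c - fourierPhase θ c') else 0) +
        (if fourierFreq c + fourierFreq c' = 0 ∨ fourierFreq c + fourierFreq c' = 2 * m + 2 then
          (2 * m + 2 : ℕ) * cos (fourierPhase θ c + fourierPhase θ c') else 0)) / 2) := by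
  have hk := fourierFreq_le c
  have hk' := fourierFreq_le c'
  simp only [mul_apply, transpose_apply, fourierMatrix, of_apply]
  simp_rw [mul_mul_mul_comm, ← mul_sum]
  rw [sum_cos_mul_cos_two_mul_pi_div _ (by omega)]
  simp only [natCast_dvd_sub_iff_of_lt (show fourierFreq c < 2 * m + 2 by omega)
      (show fourierFreq c' < 2 * m + 2 by omega),
    natCast_dvd_add_iff_of_add_le (show fourierFreq c + fourierFreq c' ≤ 2 * m + 2 by omega)]

theorem fourierMatrix_mem_orthogonalGroup (θ : Fin m → ℝ) :
    fourierMatrix θ ∈ orthogonalGroup (Fin (2 * m + 2)) ℝ := by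
  rw [mem_orthogonalGroup_iff']
  ext c c'
  rw [fourierMatrix_transpose_mul_apply, one_apply]
  by_cases hkk : fourierFreq c = fourierFreq c'
  swap
  · have := fourierFreq_le c
    have := fourierFreq_le c'
    rw [if_neg hkk, if_neg (by omega), if_neg (by rintro rfl; exact hkk rfl)]
    simp
  by_cases hc : c.1 < 2
  · obtain rfl := eq_of_fourierFreq_eq_of_lt_two hkk hc
    have hk0 : fourierFreq c = 0 ∨ fourierFreq c = m + 1 := by
      unfold fourierFreq; split_ifs <;> omega
    rw [if_pos rfl, if_pos rfl, if_pos (by omega)]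
    have hs := Real.mul_self_sqrt (show (0 : ℝ) ≤ 1 / (2 * m + 2) by positivity)
    simp only [fourierScale, fourierPhase, dif_pos hc, if_pos hc, hs, sub_self, add_zero, cos_zero]
    push_cast
    field_simp
    ring
  · have hc' : 2 ≤ c'.1 := by
      by_contra hc'
      obtain rfl := eq_of_fourierFreq_eq_of_lt_two hkk.symm (by omega)
      omega
    have hkm := fourierFreq_mem_Icc_of_two_le hc'
    rw [if_pos hkk, if_neg (by simp only [Set.mem_Icc] at hkm; omega),
      cos_fourierPhase_sub_of_fourierFreq_eq θ hkk (by omega) hc']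
    have hs := Real.mul_self_sqrt (show (0 : ℝ) ≤ 2 / (2 * m + 2) by positivity)
    simp only [fourierScale, if_neg hc, if_neg (show ¬ c'.1 < 2 by omega), hs]
    push_cast
    field_simp
    ring

variable (θ : Fin m → ℝ) (i : Fin (2 * m + 2))

lemma fourierMatrix_apply_zero (h : 0 < 2 * m + 2) :
    fourierMatrix θ i ⟨0, h⟩ = √(1 / (2 * m + 2)) := by
  simp [fourierMatrix, fourierScale, fourierPhase, fourierFreq]

lemma fourierMatrix_apply_one (h : 1 < 2 * m + 2) :
    fourierMatrix θ i ⟨1, h⟩ = √(1 / (2 * m + 2)) * (-1 : ℝ) ^ (i.1 + 1) := by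
  rw [← cos_nat_mul_pi]
  simp only [fourierMatrix, of_apply, fourierScale, fourierPhase, fourierFreq, ↓reduceIte]
  congr 2
  push_cast
  field_simp
  ring

lemma fourierMatrix_apply_cos (j : Fin m) (h : j.1 + 2 < 2 * m + 2) :
    fourierMatrix θ i ⟨j.1 + 2, h⟩ =
      √(2 / (2 * m + 2)) * cos (θ j + 2 * (i.1 + 1) * (j.1 + 1) * π / (2 * m + 2)) := by
  have := j.2
  simp only [fourierMatrix, of_apply, fourierScale, fourierPhase, fourierFreq,
    show ¬ j.1 + 2 < 2 by omega, show j.1 + 2 < m + 2 by omega, show j.1 + 2 ≠ 0 by omega,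
    show j.1 + 2 ≠ 1 by omega, show j.1 + 2 - 1 = j.1 + 1 by omega,
    dite_true, dite_false, if_true, if_false, Nat.add_sub_cancel]
  push_cast
  ring_nf

lemma fourierMatrix_apply_sin (j : Fin m) (h : m + 2 + j.1 < 2 * m + 2) :
    fourierMatrix θ i ⟨m + 2 + j.1, h⟩ =
      √(2 / (2 * m + 2)) * sin (θ j + 2 * (i.1 + 1) * (j.1 + 1) * π / (2 * m + 2)) := by
  simp only [fourierMatrix, of_apply, fourierScale, fourierPhase, fourierFreq,
    show ¬ m + 2 + j.1 < 2 by omega, show ¬ m + 2 + j.1 < m + 2 by omega,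
    show m + 2 + j.1 ≠ 0 by omega, show m + 2 + j.1 ≠ 1 by omega,
    show m + 2 + j.1 - (m + 1) = j.1 + 1 by omega, dite_false, if_false, Nat.add_sub_cancel_left]
  rw [sub_add_eq_add_sub, cos_sub_pi_div_two]
  push_cast
  ring_nf

end FourierMatrix

theorem stmt4 (m : ℕ) (θ : Fin m → ℝ)
    (A : Matrix (Fin (2 * m + 2)) (Fin (2 * m + 2)) ℝ)
    (h0 : ∀ i, A i ⟨0, by omega⟩ = Real.sqrt (1 / (2 * m + 2)))
    (hv : ∀ i : Fin (2 * m + 2),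
      A i ⟨1, by omega⟩ = Real.sqrt (1 / (2 * m + 2)) * (-1 : ℝ) ^ (i.1 + 1))
    (hC : ∀ i : Fin (2 * m + 2), ∀ j : Fin m,
      A i ⟨j.1 + 2, by omega⟩ =
        Real.sqrt (2 / (2 * m + 2)) *
          Real.cos (θ j + 2 * (i.1 + 1) * (j.1 + 1) * Real.pi / (2 * m + 2)))
    (hS : ∀ i : Fin (2 * m + 2), ∀ j : Fin m,
      A i ⟨m + 2 + j.1, by omega⟩ =
        Real.sqrt (2 / (2 * m + 2)) *
          Real.sin (θ j + 2 * (i.1 + 1) * (j.1 + 1) * Real.pi / (2 * m + 2))) :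
    A ∈ Matrix.orthogonalGroup (Fin (2 * m + 2)) ℝ := by
  suffices A = fourierMatrix θ from this ▸ fourierMatrix_mem_orthogonalGroup θ
  ext i ⟨c, hc⟩
  rcases (by omega : c = 0 ∨ c = 1 ∨ (2 ≤ c ∧ c < m + 2) ∨ m + 2 ≤ c) with rfl | rfl | hc' | hc'
  · rw [h0, fourierMatrix_apply_zero]
  · rw [hv, fourierMatrix_apply_one]
  · obtain ⟨j, hj, rfl⟩ : ∃ j, j < m ∧ c = j + 2 := ⟨c - 2, by omega, by omega⟩
    exact (hC i ⟨j, hj⟩).trans (fourierMatrix_apply_cos θ i ⟨j, hj⟩ hc).symm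
  · obtain ⟨j, hj, rfl⟩ : ∃ j, j < m ∧ c = m + 2 + j := ⟨c - (m + 2), by omega, by omega⟩
    exact (hS i ⟨j, hj⟩).trans (fourierMatrix_apply_sin θ i ⟨j, hj⟩ hc).symm
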